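/- Let {ρ_k} be a finite ensemble of positive semidefinite operators with Σ Tr ρ_k = 1 on a finite-dimensional Hilbert space. Then Λ := Tr√(Σ_k ρ_k²) ≤ 1. -/

import Mathlib

/-
Write `S = √(∑ ρₖ²)` and regularize it to the invertible `T = S + ε`. Since `ρₖ² ≤ S² ≤ T²`, the
matrix `Mₖ = ρₖ T⁻¹` is a contraction, and a contraction satisfies `M + Mᴴ ≤ 1 + MᴴM ≤ 2`, so
`Re Tr (T⁻¹ ρₖ²) = Re Tr (Mₖ ρₖ) ≤ Tr ρₖ`. Summing over `k` gives `Re Tr (T⁻¹ S²) ≤ ∑ Tr ρₖ = 1`,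
while `T⁻¹ S² = S - ε + ε² T⁻¹` gives `Re Tr (T⁻¹ S²) ≥ Re Tr S - ε n`. Let `ε → 0`.
-/

open Matrix ComplexOrder

namespace Matrix.PosSemidef

/-- The positive semidefinite square root of a positive semidefinite matrix
(the definition Mathlib had in December 2024, since removed). -/
noncomputable def sqrt {n : Type*} [Fintype n] [DecidableEq n] {𝕜 : Type*} [RCLike 𝕜]
    {A : Matrix n n 𝕜} (hA : A.PosSemidef) : Matrix n n 𝕜 :=
  hA.1.eigenvectorUnitary.1 * diagonal ((↑) ∘ (√·) ∘ hA.1.eigenvalues) *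
  (star hA.1.eigenvectorUnitary : Matrix n n 𝕜)

end Matrix.PosSemidef

open scoped MatrixOrder

open Filter Topology in
lemma le_of_forall_pos_le_add_mul {a b c : ℝ} (h : ∀ ε > 0, a ≤ b + ε * c) : a ≤ b := by
  have hlim : Tendsto (fun ε : ℝ => b + ε * c) (𝓝[>] 0) (𝓝 b) := by
    have : Continuous (fun ε : ℝ => b + ε * c) := by fun_prop
    simpa using (this.tendsto 0).mono_left nhdsWithin_le_nhds
  exact ge_of_tendsto hlim (eventually_nhdsWithin_of_forall h)

namespace Matrix

variable {n 𝕜 : Type*} [RCLike 𝕜]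

lemma posDef_add_smul_one [DecidableEq n] {S : Matrix n n 𝕜} (hS : 0 ≤ S) {ε : ℝ} (hε : 0 < ε) :
    (S + ε • 1).PosDef :=
  (PosDef.one.smul hε).posSemidef_add hS.posSemidef

variable [Fintype n]

lemma re_trace_conjTranspose_mul (M : Matrix n n 𝕜) {ρ : Matrix n n 𝕜} (hρ : ρ.IsHermitian) :
    RCLike.re (Mᴴ * ρ).trace = RCLike.re (M * ρ).trace := by
  rw [← hρ.eq, ← conjTranspose_mul, trace_conjTranspose, RCLike.star_def, RCLike.conj_re,
    trace_mul_comm, hρ.eq]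

variable [DecidableEq n]

lemma PosSemidef.sqrt_eq_cfcSqrt {A : Matrix n n 𝕜} (hA : A.PosSemidef) :
    hA.sqrt = CFC.sqrt A := by
  rw [CFC.sqrt_eq_real_sqrt A hA.nonneg, cfcₙ_eq_cfc, hA.1.cfc_eq]
  rfl

lemma trace_mul_nonneg {A B : Matrix n n 𝕜} (hA : 0 ≤ A) (hB : 0 ≤ B) :
    0 ≤ (A * B).trace := by
  rw [← CFC.sqrt_mul_sqrt_self B, ← mul_assoc, trace_mul_comm, ← mul_assoc]
  exact (conjugate_nonneg_of_nonneg hA (CFC.sqrt_nonneg B)).posSemidef.trace_nonneg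

lemma re_trace_mul_le_of_conjTranspose_mul_self_le_one {M ρ : Matrix n n 𝕜} (hρ : 0 ≤ ρ)
    (hM : Mᴴ * M ≤ 1) : RCLike.re (M * ρ).trace ≤ RCLike.re ρ.trace := by
  have hsum : M + Mᴴ ≤ 2 := by
    calc M + Mᴴ ≤ M + Mᴴ + (1 - M)ᴴ * (1 - M) :=
          le_add_of_nonneg_right (posSemidef_conjTranspose_mul_self _).nonneg
      _ = 1 + Mᴴ * M := by rw [conjTranspose_sub, conjTranspose_one]; noncomm_ring
      _ ≤ 1 + 1 := by gcongr
      _ = 2 := one_add_one_eq_two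
  have h := RCLike.nonneg_iff.mp (trace_mul_nonneg (sub_nonneg.2 hsum) hρ)
  rw [sub_mul, add_mul, two_mul, trace_sub, trace_add, trace_add, map_sub, map_add, map_add,
    re_trace_conjTranspose_mul M hρ.posSemidef.isHermitian] at h
  linarith [h.1]

lemma re_trace_inv_mul_sq_le {T ρ : Matrix n n 𝕜} (hT : T.PosDef) (hρ : 0 ≤ ρ)
    (hρT : ρ ^ 2 ≤ T ^ 2) : RCLike.re (T⁻¹ * ρ ^ 2).trace ≤ RCLike.re ρ.trace := by
  have hTinv : T⁻¹ᴴ = T⁻¹ := hT.inv.isHermitian.eq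
  have hdet : IsUnit T.det := (isUnit_iff_isUnit_det T).mp hT.isUnit
  have hcontr : (ρ * T⁻¹)ᴴ * (ρ * T⁻¹) ≤ 1 := by
    convert star_left_conjugate_le_conjugate hρT T⁻¹ using 1
    · rw [star_eq_conjTranspose, conjTranspose_mul, hTinv, hρ.posSemidef.isHermitian.eq, sq]
      simp only [mul_assoc]
    · rw [star_eq_conjTranspose, hTinv, sq, ← mul_assoc T⁻¹, nonsing_inv_mul _ hdet, one_mul,
        mul_nonsing_inv _ hdet]
  calc RCLike.re (T⁻¹ * ρ ^ 2).trace = RCLike.re (ρ * T⁻¹ * ρ).trace := by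
        rw [sq, ← mul_assoc, trace_mul_comm, mul_assoc]
    _ ≤ RCLike.re ρ.trace := re_trace_mul_le_of_conjTranspose_mul_self_le_one hρ hcontr

lemma sq_le_sq_add_smul_one {S : Matrix n n 𝕜} (hS : 0 ≤ S) {ε : ℝ} (hε : 0 ≤ ε) :
    S ^ 2 ≤ (S + ε • 1) ^ 2 := by
  have h : (S + ε • 1) ^ 2 = S ^ 2 + ((2 * ε) • S + (ε ^ 2) • 1) := by
    simp only [sq, add_mul, mul_add, smul_mul_assoc, mul_smul_comm, one_mul, mul_one]
    module
  rw [h, le_add_iff_nonneg_right]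
  exact ((hS.posSemidef.smul (by positivity)).add (PosSemidef.one.smul (by positivity))).nonneg

lemma re_trace_le_re_trace_inv_mul_sq_add {S : Matrix n n 𝕜} (hS : 0 ≤ S) {ε : ℝ} (hε : 0 < ε) :
    RCLike.re S.trace ≤
      RCLike.re ((S + ε • 1)⁻¹ * S ^ 2).trace + ε * Fintype.card n := by
  set T := S + ε • (1 : Matrix n n 𝕜)
  have hT : T.PosDef := posDef_add_smul_one hS hε
  have hdet : IsUnit T.det := (isUnit_iff_isUnit_det T).mp hT.isUnit
  have hinvS : T⁻¹ * S = 1 - ε • T⁻¹ := by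
    rw [show S = T - ε • 1 by simp [T], mul_sub, nonsing_inv_mul _ hdet, mul_smul_comm, mul_one]
  have hinvSS : T⁻¹ * S ^ 2 = S - ε • 1 + (ε ^ 2) • T⁻¹ := by
    rw [sq, ← mul_assoc, hinvS, sub_mul, one_mul, smul_mul_assoc, hinvS, smul_sub, smul_smul, sq]
    abel
  have hinv_nonneg : 0 ≤ RCLike.re T⁻¹.trace :=
    (RCLike.nonneg_iff.mp hT.inv.posSemidef.trace_nonneg).1
  rw [hinvSS, trace_add, trace_sub, trace_smul, trace_smul, trace_one, map_add, map_sub]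
  simp only [RCLike.smul_re, RCLike.natCast_re]
  nlinarith [sq_nonneg ε]

theorem re_trace_le_sum_re_trace_of_sq_eq_sum_sq {ι : Type*} (s : Finset ι) {S : Matrix n n 𝕜}
    {ρ : ι → Matrix n n 𝕜} (hS : 0 ≤ S) (hρ : ∀ i ∈ s, 0 ≤ ρ i)
    (hSρ : S ^ 2 = ∑ i ∈ s, ρ i ^ 2) :
    RCLike.re S.trace ≤ ∑ i ∈ s, RCLike.re (ρ i).trace := by
  refine le_of_forall_pos_le_add_mul (c := Fintype.card n) fun ε hε => ?_
  set T := S + ε • (1 : Matrix n n 𝕜)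
  have hT : T.PosDef := posDef_add_smul_one hS hε
  have hρT (i : ι) (hi : i ∈ s) : ρ i ^ 2 ≤ T ^ 2 := by
    refine le_trans ?_ (sq_le_sq_add_smul_one hS hε.le)
    rw [hSρ]
    exact Finset.single_le_sum (fun j hj => (IsSelfAdjoint.of_nonneg (hρ j hj)).sq_nonneg) hi
  calc RCLike.re S.trace ≤ RCLike.re (T⁻¹ * S ^ 2).trace + ε * Fintype.card n :=
        re_trace_le_re_trace_inv_mul_sq_add hS hε
    _ = ∑ i ∈ s, RCLike.re (T⁻¹ * ρ i ^ 2).trace + ε * Fintype.card n := by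
        rw [hSρ, Finset.mul_sum, trace_sum, map_sum]
    _ ≤ ∑ i ∈ s, RCLike.re (ρ i).trace + ε * Fintype.card n := by
        gcongr ∑ i ∈ s, ?_ + _ with i hi
        exact re_trace_inv_mul_sq_le hT (hρ i hi) (hρT i hi)

end Matrix

/-- For a finite ensemble `{ρ_k}` of positive semidefinite operators with
`Σ Tr ρ_k = 1`, one has `Λ = Tr √(Σ ρ_k²) ≤ 1`. -/
theorem holevo_curlander_lambda_le_one
    {n K : Type*} [Fintype n] [DecidableEq n] [Fintype K]
    (ρ : K → Matrix n n ℂ) (hρ : ∀ k, (ρ k).PosSemidef)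
    (hnorm : (∑ k, (ρ k).trace) = 1)
    (hS : (∑ k, (ρ k) ^ 2).PosSemidef) :
    hS.sqrt.trace.re ≤ 1 := by
  have h := Matrix.re_trace_le_sum_re_trace_of_sq_eq_sum_sq Finset.univ
    (CFC.sqrt_nonneg (∑ k, ρ k ^ 2)) (fun k _ => (hρ k).nonneg) (CFC.sq_sqrt _ hS.nonneg)
  rwa [← hS.sqrt_eq_cfcSqrt, ← map_sum, hnorm, RCLike.one_re] at h
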